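/- arXiv:2007.11769 — 2 statements merged into one kernel-verified Lean document; each statement's English description precedes it below -/
import Mathlib

section
/- If S ≤ S_n is a subgroup of the stabilizer of a point k ∈ [n] that acts transitively on [n] \ {k}, and (j k) is a transposition with j ≠ k, then S together with (j k) generates the full symmetric group S_n. -/
open SimpleGraph Equiv

/-- The labeled copy `G_σ`, with edges `v_{σ⁻¹ i} v_{σ⁻¹ j}` for edges `v_i v_j` of `G`. -/
def copyG {V : Type*} (G : SimpleGraph V) (σ : Equiv.Perm V) : SimpleGraph V where
  Adj a b := G.Adj (σ a) (σ b)
  symm := ⟨fun _ _ h => G.symm.symm _ _ h⟩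
  loopless := ⟨fun _ h => G.loopless.irrefl _ h⟩

/-- The graph `G - v_r v_s + v_k v_l`. -/
def replaceG {V : Type*} (G : SimpleGraph V) (r s k l : V) : SimpleGraph V :=
  SimpleGraph.fromEdgeSet ((G.edgeSet \ {s(r, s)}) ∪ {s(k, l)})

/-- The edge-replacement `rs → kl` is feasible: `v_r v_s ∈ E(G)`, `v_k v_l` is a non-edge or
`{k,l} = {r,s}`, and `G - v_r v_s + v_k v_l ≅ G`. -/
def IsFeasible {V : Type*} (G : SimpleGraph V) (r s k l : V) : Prop :=
  G.Adj r s ∧ (Gᶜ.Adj k l ∨ s(k, l) = s(r, s)) ∧ Nonempty (replaceG G r s k l ≃g G)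

/-- The permutations realizing feasible edge-replacements of `G`. -/
def feasiblePerms {V : Type*} (G : SimpleGraph V) : Set (Equiv.Perm V) :=
  {σ | ∃ r s k l, IsFeasible G r s k l ∧ copyG G σ = replaceG G r s k l}

/-- The group `S_G` generated by all permutations realizing feasible edge-replacements. -/
def ampGroup {V : Type*} (G : SimpleGraph V) : Subgroup (Equiv.Perm V) :=
  Subgroup.closure (feasiblePerms G)

/-- `G` is a local amoeba if `S_G` is the full symmetric group. -/
def LocalAmoeba {V : Type*} (G : SimpleGraph V) : Prop := ampGroup G = ⊤

/-- Disjoint union of two graphs. -/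
def sumGraph {V W : Type*} (H : SimpleGraph V) (H' : SimpleGraph W) : SimpleGraph (V ⊕ W) :=
  SimpleGraph.map Sum.inl H ⊔ SimpleGraph.map Sum.inr H'

/-- `G` together with `t` additional isolated vertices. -/
def addIsolated {V : Type*} (G : SimpleGraph V) (t : ℕ) : SimpleGraph (V ⊕ Fin t) :=
  sumGraph G (⊥ : SimpleGraph (Fin t))

/-- `G` is a global amoeba if `G ∪ tK₁` is a local amoeba for all sufficiently large `t`. -/
def GlobalAmoeba {V : Type*} (G : SimpleGraph V) : Prop :=
  ∃ T : ℕ, ∀ t ≥ T, LocalAmoeba (addIsolated G t)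

/-! Conjugating the transposition `(j k)` by `S` gives every transposition `(a k)`, since `S` fixes
`k` and moves `j` to any `a ≠ k`; the transpositions through a common point `k` generate `S_n`. -/

theorem swap_apply_apply_mem {α : Type*} [DecidableEq α] {H : Subgroup (Perm α)} {σ : Perm α}
    {x y : α} (hσ : σ ∈ H) (hxy : swap x y ∈ H) : swap (σ x) (σ y) ∈ H := by
  rw [swap_apply_apply]
  exact H.mul_mem (H.mul_mem hσ hxy) (H.inv_mem hσ)

theorem Subgroup.eq_top_of_forall_swap_mem {α : Type*} [Finite α] [DecidableEq α]
    (H : Subgroup (Perm α)) (k : α) (h : ∀ a, a ≠ k → swap a k ∈ H) : H = ⊤ := by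
  have hk : ∀ a, swap a k ∈ H := fun a ↦ by
    rcases eq_or_ne a k with rfl | ha
    · exact swap_self a ▸ H.one_mem
    · exact h a ha
  rw [eq_top_iff, ← Perm.closure_isSwap, Subgroup.closure_le]
  rintro _ ⟨a, b, -, rfl⟩
  exact SubmonoidClass.swap_mem_trans H (hk a) (swap_comm k b ▸ hk b)

theorem stmt10 {α : Type*} [Fintype α] [DecidableEq α] (S : Subgroup (Equiv.Perm α)) (k : α)
    (hstab : ∀ σ ∈ S, σ k = k)
    (htrans : ∀ a b : α, a ≠ k → b ≠ k → ∃ σ ∈ S, σ a = b)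
    (j : α) (hj : j ≠ k) :
    Subgroup.closure ((S : Set (Equiv.Perm α)) ∪ {Equiv.swap j k}) = ⊤ := by
  set H := Subgroup.closure ((S : Set (Equiv.Perm α)) ∪ {Equiv.swap j k})
  have hS : S ≤ H := fun σ hσ ↦ Subgroup.subset_closure (Or.inl hσ)
  have hjk : swap j k ∈ H := Subgroup.subset_closure (Or.inr rfl)
  refine H.eq_top_of_forall_swap_mem k fun a ha ↦ ?_
  obtain ⟨σ, hσ, rfl⟩ := htrans j a hj ha
  simpa only [hstab σ hσ] using swap_apply_apply_mem (hS hσ) hjk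
end

section
/- Let G be a non-empty graph on vertices v_1,...,v_n. Then G is a global amoeba if and only if for each x ∈ [n] there exists y in the S_G-orbit of x with deg_G(v_y) = 1, and these are also both equivalent to G ∪ K_1 being a local amoeba. -/
open SimpleGraph Equiv

/-!
If every `S_G`-orbit contains a pendant vertex `v`, with neighbour `n`, then moving the edge `vn`
to `n w` for an added isolated vertex `w` is realized by the transposition of `v` and `w`.
Conjugating by `S_G` gives all transpositions between `V` and the added vertices, so
`G ∪ tK₁` is a local amoeba for every `t ≥ 1`.

Conversely, a feasible replacement of `G ∪ tK₁` can be normalized, by swapping isolated vertices,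
into one whose new edge lies in `V`; it then comes from a feasible replacement of `G`, realized by
a permutation that agrees with the original one on the vertices of degree at least two. Hence an
`S_G`-orbit without pendant vertices, together with the isolated vertices if it contains one,
gives a proper subset of `V ⊕ Fin t` invariant under `S_{G ∪ tK₁}`.
-/

/-- Degree one, stated without the `Fintype` and `DecidableRel` instances that `degree` needs. -/
def SimpleGraph.IsPendant {V : Type*} (G : SimpleGraph V) (v : V) : Prop := ∃! w, G.Adj v w

section General

variable {V : Type*} {G X Y : SimpleGraph V} {σ τ : Perm V} {r s k l u z a b v : V}

@[simp]
lemma copyG_adj : (copyG G σ).Adj a b ↔ G.Adj (σ a) (σ b) := Iff.rfl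

lemma copyG_copyG : copyG (copyG G σ) τ = copyG G (σ * τ) := rfl

lemma isIsolated_copyG_iff : (copyG G σ).IsIsolated a ↔ G.IsIsolated (σ a) :=
  σ.forall_congr_right (q := fun w => ¬G.Adj (σ a) w)

lemma isPendant_copyG_iff : (copyG G σ).IsPendant a ↔ G.IsPendant (σ a) := by
  simp only [IsPendant, copyG_adj]
  exact σ.existsUnique_congr_left.trans (by simp)

lemma nonempty_iso_iff_exists_copyG : Nonempty (X ≃g Y) ↔ ∃ σ : Perm V, copyG Y σ = X :=
  ⟨fun ⟨e⟩ => ⟨e.toEquiv, by ext; exact e.map_rel_iff⟩,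
    fun ⟨σ, h⟩ => h ▸ ⟨⟨σ, Iff.rfl⟩⟩⟩

lemma ne_of_adj_of_isIsolated (h : G.Adj a b) (hu : G.IsIsolated u) : a ≠ u :=
  fun e => h.not_isIsolated_left (e ▸ hu)

lemma copyG_swap_eq_self [DecidableEq V] (hu : G.IsIsolated u) (hz : G.IsIsolated z) :
    copyG G (swap u z) = G := by
  have key : ∀ a b, G.Adj a b → G.Adj (swap u z a) (swap u z b) := by
    intro a b h
    rwa [swap_apply_of_ne_of_ne (ne_of_adj_of_isIsolated h hu) (ne_of_adj_of_isIsolated h hz),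
      swap_apply_of_ne_of_ne (ne_of_adj_of_isIsolated h.symm hu)
        (ne_of_adj_of_isIsolated h.symm hz)]
  ext a b
  exact ⟨fun h => by simpa using key _ _ h, key a b⟩

lemma replaceG_adj : (replaceG G r s k l).Adj a b ↔
    (G.Adj a b ∧ s(a, b) ≠ s(r, s)) ∨ (s(a, b) = s(k, l) ∧ a ≠ b) := by
  simp only [replaceG, fromEdgeSet_adj, Set.mem_union, Set.mem_sdiff, Set.mem_singleton_iff,
    mem_edgeSet]
  constructor
  · rintro ⟨h | h, hab⟩
    exacts [Or.inl h, Or.inr ⟨h, hab⟩]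
  · rintro (h | h)
    exacts [⟨Or.inl h, h.1.ne⟩, ⟨Or.inr h.1, h.2⟩]

lemma replaceG_comm : replaceG G r s k l = replaceG G r s l k := by
  rw [replaceG, replaceG, Sym2.eq_swap (a := k)]

lemma replaceG_self (h : G.Adj r s) : replaceG G r s r s = G := by
  rw [replaceG, Set.sdiff_union_self, Set.union_eq_self_of_subset_right
    (Set.singleton_subset_iff.2 (G.mem_edgeSet.2 h)), fromEdgeSet_edgeSet]

lemma isIsolated_replaceG (ha : G.IsIsolated a) (hak : a ≠ k) (hal : a ≠ l) :
    (replaceG G r s k l).IsIsolated a := by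
  intro b h
  rcases replaceG_adj.1 h with h | ⟨h, -⟩
  · exact ha b h.1
  · rcases Sym2.eq_iff.1 h with ⟨rfl, -⟩ | ⟨rfl, -⟩
    exacts [hak rfl, hal rfl]

lemma SimpleGraph.IsPendant.not_isIsolated {v : V} (h : G.IsPendant v) : ¬G.IsIsolated v :=
  fun hv => hv _ h.exists.choose_spec

lemma isPendant_replaceG (hk : G.IsIsolated k) (hkl : k ≠ l) :
    (replaceG G r s k l).IsPendant k := by
  refine ⟨l, replaceG_adj.2 (Or.inr ⟨rfl, hkl⟩), fun b h => ?_⟩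
  rcases replaceG_adj.1 h with h | ⟨h, -⟩
  · exact absurd h.1 (hk b)
  · rcases Sym2.eq_iff.1 h with ⟨-, rfl⟩ | ⟨rfl, -⟩
    exacts [rfl, absurd rfl hkl]

/-- A vertex with two neighbours keeps one of them when a single edge is removed. -/
lemma not_isIsolated_replaceG (h₀ : ¬G.IsIsolated v) (h₁ : ¬G.IsPendant v) :
    ¬(replaceG G r s k l).IsIsolated v := by
  obtain ⟨b, hb⟩ := exists_adj_iff_not_isIsolated.2 h₀
  obtain ⟨c, hc, hcb⟩ : ∃ c, G.Adj v c ∧ c ≠ b := by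
    by_contra! h
    exact h₁ ⟨b, hb, h⟩
  intro hiso
  refine hiso _ (replaceG_adj.2 (Or.inl ⟨hb, fun hbrs => hiso c (replaceG_adj.2 (Or.inl
    ⟨hc, fun hcrs => ?_⟩))⟩))
  rw [← hcrs, Sym2.eq_iff] at hbrs
  rcases hbrs with ⟨-, h⟩ | ⟨-, rfl⟩
  exacts [hcb h.symm, G.irrefl hb]

lemma copyG_replaceG_swap [DecidableEq V] (hu : G.IsIsolated u)
    (hz : (replaceG G r s k u).IsIsolated z) (hku : k ≠ u) :
    copyG (replaceG G r s k u) (swap u z) = replaceG G r s k z := by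
  have hzk : z ≠ k := fun h => hz u (replaceG_adj.2 (Or.inr ⟨by rw [h], h ▸ hku⟩))
  have hW := copyG_swap_eq_self (G := G.deleteEdges {s(r, s)})
    (fun w h => hu w (deleteEdges_le _ h))
    (fun w h => hz w (replaceG_adj.2 (Or.inl (by simpa using h))))
  ext a b
  have hdel := congrArg (fun H => H.Adj a b) hW
  simp only [copyG_adj, deleteEdges_adj, Set.mem_singleton_iff, eq_iff_iff] at hdel
  have hnew : s(swap u z a, swap u z b) = s(k, u) ↔ s(a, b) = s(k, z) := by
    calc _ ↔ Sym2.map (swap u z) s(a, b) = Sym2.map (swap u z) s(k, z) := by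
          rw [Sym2.map_mk, Sym2.map_mk, swap_apply_of_ne_of_ne hku hzk.symm, swap_apply_right]
      _ ↔ _ := (Sym2.map.injective (swap u z).injective).eq_iff
  rw [copyG_adj, replaceG_adj, replaceG_adj, hdel, hnew, (swap u z).injective.ne_iff]

lemma IsFeasible.ne (h : IsFeasible G r s k l) : k ≠ l := by
  rcases h.2.1 with h' | h'
  · exact h'.ne
  · rintro rfl
    exact h.1.ne (Sym2.eq_iff.1 h' |>.elim (fun h => h.1.symm.trans h.2)
      fun h => h.2.symm.trans h.1)

lemma IsFeasible.symm (h : IsFeasible G r s k l) : IsFeasible G r s l k := by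
  obtain ⟨hrs, hkl, hiso⟩ := h
  exact ⟨hrs, hkl.imp (·.symm) (Sym2.eq_swap.trans ·), replaceG_comm (G := G) ▸ hiso⟩

lemma isFeasible_of_copyG (hrs : G.Adj r s) (hkl : Gᶜ.Adj k l ∨ s(k, l) = s(r, s))
    (h : copyG G σ = replaceG G r s k l) : IsFeasible G r s k l :=
  ⟨hrs, hkl, nonempty_iso_iff_exists_copyG.2 ⟨σ, h⟩⟩

lemma IsFeasible.exists_mem_feasiblePerms (h : IsFeasible G r s k l) :
    ∃ σ ∈ feasiblePerms G, copyG G σ = replaceG G r s k l := by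
  obtain ⟨σ, hσ⟩ := nonempty_iso_iff_exists_copyG.1 h.2.2
  exact ⟨σ, ⟨r, s, k, l, h, hσ⟩, hσ⟩

lemma IsFeasible.isPendant_apply (h : IsFeasible G r s k l)
    (hσ : copyG G σ = replaceG G r s k l) (hk : G.IsIsolated k) : G.IsPendant (σ k) :=
  isPendant_copyG_iff.1 (hσ ▸ isPendant_replaceG hk h.ne)

lemma isIsolated_apply_of_copyG_eq_replaceG (hσ : copyG G σ = replaceG G r s k l)
    (ha : G.IsIsolated a) (hak : a ≠ k) (hal : a ≠ l) : G.IsIsolated (σ a) :=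
  isIsolated_copyG_iff.1 (hσ ▸ isIsolated_replaceG ha hak hal)

lemma IsFeasible.relocate [DecidableEq V] (h : IsFeasible G r s k u)
    (hσ : copyG G σ = replaceG G r s k u) (hu : G.IsIsolated u)
    (hz : (replaceG G r s k u).IsIsolated z) :
    IsFeasible G r s k z ∧ copyG G (σ * swap u z) = replaceG G r s k z := by
  have hσ' : copyG G (σ * swap u z) = replaceG G r s k z := by
    rw [← copyG_copyG, hσ, copyG_replaceG_swap hu hz h.ne]
  refine ⟨isFeasible_of_copyG h.1 ?_ hσ', hσ'⟩
  by_cases hkz : G.Adj k z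
  · right
    by_contra hne
    exact hz k (replaceG_adj.2 (Or.inl ⟨hkz.symm, fun e => hne (Sym2.eq_swap.trans e)⟩))
  · left
    refine (compl_adj G k z).2 ⟨fun e => hz u ?_, hkz⟩
    exact replaceG_adj.2 (Or.inr ⟨by rw [e], e ▸ h.ne⟩)

lemma swap_mem_feasiblePerms_of_isIsolated [DecidableEq V] (hne : G ≠ ⊥)
    (hu : G.IsIsolated u) (hz : G.IsIsolated z) : swap u z ∈ feasiblePerms G := by
  obtain ⟨a, b, hab⟩ := ne_bot_iff_exists_adj.1 hne
  have hσ : copyG G (swap u z) = replaceG G a b a b := by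
    rw [replaceG_self hab, copyG_swap_eq_self hu hz]
  exact ⟨a, b, a, b, isFeasible_of_copyG hab (Or.inr rfl) hσ, hσ⟩

lemma LocalAmoeba.mem_of_mapsTo [Finite V] (h : LocalAmoeba G) {Z : Set V}
    (hZ : ∀ σ ∈ feasiblePerms G, Set.MapsTo σ Z Z) (ha : a ∈ Z) : b ∈ Z := by
  classical
  have hmem : swap a b ∈ Submonoid.closure (feasiblePerms G) := by
    rw [← Subgroup.closure_toSubmonoid_of_finite]
    exact (h ▸ Subgroup.mem_top _ : swap a b ∈ ampGroup G)
  have hclosure : ∀ σ ∈ Submonoid.closure (feasiblePerms G), Set.MapsTo σ Z Z := by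
    intro σ hσ
    induction hσ using Submonoid.closure_induction with
    | mem σ hσ => exact hZ σ hσ
    | one => exact Set.mapsTo_id Z
    | mul σ τ _ _ hσ hτ => exact hσ.comp hτ
  simpa using hclosure _ hmem ha

lemma mapsTo_isIsolated
    (h : ∀ r s k l σ, IsFeasible G r s k l → copyG G σ = replaceG G r s k l → ¬G.IsIsolated k)
    (hσ : σ ∈ feasiblePerms G) :
    Set.MapsTo σ {a | G.IsIsolated a} {a | G.IsIsolated a} := by
  obtain ⟨r, s, k, l, hfe, hσ⟩ := hσ
  intro a ha
  exact isIsolated_apply_of_copyG_eq_replaceG hσ ha (fun e => h _ _ _ _ _ hfe hσ (e ▸ ha))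
    (fun e => h _ _ _ _ _ hfe.symm (replaceG_comm ▸ hσ) (e ▸ ha))

end General

section AddIsolated

open Sum

variable {V : Type*} {G X Y : SimpleGraph V} {t : ℕ} {σ : Perm (V ⊕ Fin t)} {φ : Perm V}
  {r s k l a b v : V} {j : Fin t} {x y : V ⊕ Fin t}

lemma addIsolated_adj :
    (addIsolated G t).Adj x y ↔ ∃ a b, G.Adj a b ∧ inl a = x ∧ inl b = y := by
  simp only [addIsolated, sumGraph, sup_adj, map_adj', bot_adj, false_and, exists_false,
    and_false, or_false, and_iff_right_iff_imp]
  rintro ⟨a, b, h, rfl, rfl⟩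
  exact inl_injective.ne h.ne

@[simp]
lemma addIsolated_adj_inl_inl : (addIsolated G t).Adj (inl a) (inl b) ↔ G.Adj a b := by
  simp [addIsolated_adj]

@[simp]
lemma not_addIsolated_adj_inr : ¬(addIsolated G t).Adj x (inr j) := by
  simp [addIsolated_adj]

@[simp]
lemma not_addIsolated_inr_adj : ¬(addIsolated G t).Adj (inr j) x := by
  simp [addIsolated_adj]

lemma isIsolated_addIsolated_inr : (addIsolated G t).IsIsolated (inr j) :=
  fun _ => not_addIsolated_inr_adj

lemma isIsolated_addIsolated_inl_iff : (addIsolated G t).IsIsolated (inl v) ↔ G.IsIsolated v := by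
  simp [IsIsolated, Sum.forall]

lemma isPendant_addIsolated_inl_iff : (addIsolated G t).IsPendant (inl v) ↔ G.IsPendant v := by
  simp only [IsPendant, ExistsUnique, Sum.exists, Sum.forall, addIsolated_adj_inl_inl,
    not_addIsolated_adj_inr, false_imp_iff, implies_true, and_true, false_and, inl.injEq,
    exists_false, or_false]

lemma not_isPendant_addIsolated_inr : ¬(addIsolated G t).IsPendant (inr j) :=
  fun ⟨_, h, _⟩ => not_addIsolated_inr_adj h

lemma isPendant_addIsolated_iff {x : V ⊕ Fin t} :
    (addIsolated G t).IsPendant x ↔ ∃ v, x = inl v ∧ G.IsPendant v := by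
  rcases x with v | j
  · simp [isPendant_addIsolated_inl_iff]
  · simpa using not_isPendant_addIsolated_inr

lemma copyG_addIsolated_sumCongr :
    copyG (addIsolated G t) (φ.sumCongr 1) = addIsolated (copyG G φ) t := by
  ext (a | i) (b | j) <;> simp

lemma replaceG_addIsolated :
    replaceG (addIsolated G t) (inl r) (inl s) (inl k) (inl l) =
      addIsolated (replaceG G r s k l) t := by
  ext (a | i) (b | j) <;> simp [replaceG_adj]

lemma addIsolated_newEdge_inl_iff :
    ((addIsolated G t)ᶜ.Adj (inl k) (inl l) ∨ s(inl k, inl l) = s((inl r : V ⊕ Fin t), inl s)) ↔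
      (Gᶜ.Adj k l ∨ s(k, l) = s(r, s)) := by
  simp

variable (G t) in
noncomputable def nonIsolatedAddIsolatedEquiv :
    {v // ¬G.IsIsolated v} ≃ {x : V ⊕ Fin t // ¬(addIsolated G t).IsIsolated x} :=
  Equiv.ofBijective (fun v => ⟨inl v.1, isIsolated_addIsolated_inl_iff.not.2 v.2⟩) <| by
    refine ⟨fun v w h => Subtype.ext (inl_injective (congrArg Subtype.val h)), ?_⟩
    rintro ⟨a | j, ha⟩
    · exact ⟨⟨a, isIsolated_addIsolated_inl_iff.not.1 ha⟩, rfl⟩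
    · exact absurd isIsolated_addIsolated_inr ha

/-- `σ` maps the non-isolated vertices of `X ∪ tK₁`, which all lie in `V`, onto those of
`Y ∪ tK₁`; the isolated vertices of `X` and `Y` are then equinumerous and are matched
arbitrarily. -/
lemma exists_copyG_eq_of_copyG_addIsolated [Fintype V]
    (h : copyG (addIsolated Y t) σ = addIsolated X t) :
    ∃ φ : Perm V, copyG Y φ = X ∧ ∀ v, ¬X.IsIsolated v → σ (inl v) = inl (φ v) := by
  classical
  let e : {v // ¬X.IsIsolated v} ≃ {w // ¬Y.IsIsolated w} :=
    (nonIsolatedAddIsolatedEquiv X t).trans <|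
      (σ.subtypeEquiv fun x => by rw [← h, isIsolated_copyG_iff]).trans
        (nonIsolatedAddIsolatedEquiv Y t).symm
  have hφ : ∀ v, ¬X.IsIsolated v → σ (inl v) = inl (e.extendSubtype v) := fun v hv => by
    rw [extendSubtype_apply_of_mem e v hv]
    exact congrArg Subtype.val ((nonIsolatedAddIsolatedEquiv Y t).apply_symm_apply
      (σ.subtypeEquiv _ (nonIsolatedAddIsolatedEquiv X t ⟨v, hv⟩))).symm
  refine ⟨e.extendSubtype, ?_, hφ⟩
  ext a b
  rw [copyG_adj]
  by_cases ha : X.IsIsolated a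
  · exact iff_of_false (not_not.1 (extendSubtype_not_mem e a (not_not.2 ha)) _) (ha b)
  by_cases hb : X.IsIsolated b
  · exact iff_of_false (fun hab => not_not.1 (extendSubtype_not_mem e b (not_not.2 hb)) _
      hab.symm) (fun hab => hb a hab.symm)
  rw [← addIsolated_adj_inl_inl (t := t), ← hφ a ha, ← hφ b hb, ← copyG_adj, h,
    addIsolated_adj_inl_inl]

end AddIsolated

section Transfer

open Sum

variable {V : Type*} {G : SimpleGraph V} {t : ℕ} {σ : Perm (V ⊕ Fin t)} {r s : V}
  {k l : V ⊕ Fin t}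

/-- A new edge at an added vertex `inr j` leaves only `t - 1` added vertices isolated, so an
isomorphism to `G ∪ tK₁` forces some vertex of `G` to become isolated. -/
lemma exists_inl_isIsolated_replaceG {r s : V ⊕ Fin t} {j : Fin t}
    (hσ : copyG (addIsolated G t) σ = replaceG (addIsolated G t) r s k (inr j))
    (hk : k ≠ inr j) : ∃ z, (replaceG (addIsolated G t) r s k (inr j)).IsIsolated (inl z) := by
  by_contra! hnone
  have hpre : ∀ i, ∃ i', σ.symm (inr i) = inr i' ∧ i' ≠ j := by
    intro i
    have hiso : (replaceG (addIsolated G t) r s k (inr j)).IsIsolated (σ.symm (inr i)) := by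
      rw [← hσ, isIsolated_copyG_iff, apply_symm_apply]
      exact isIsolated_addIsolated_inr
    rcases hx : σ.symm (inr i) with z | i'
    · exact absurd (hx ▸ hiso) (hnone z)
    · refine ⟨i', rfl, ?_⟩
      rintro rfl
      exact (hx ▸ hiso) k (replaceG_adj.2 (Or.inr ⟨Sym2.eq_swap, hk.symm⟩))
  choose f hf hfj using hpre
  have hf_inj : Function.Injective f := fun i i' h =>
    inr_injective (σ.symm.injective ((hf i).trans (h ▸ (hf i').symm)))
  obtain ⟨i, hi⟩ := (Finite.injective_iff_surjective.1 hf_inj) j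
  exact hfj i hi

lemma IsFeasible.exists_inl_endpoint (hfe : IsFeasible (addIsolated G t) (inl r) (inl s) k l)
    (hσ : copyG (addIsolated G t) σ = replaceG (addIsolated G t) (inl r) (inl s) k l) :
    ∃ l₀ ρ, IsFeasible (addIsolated G t) (inl r) (inl s) k (inl l₀) ∧
      copyG (addIsolated G t) ρ = replaceG (addIsolated G t) (inl r) (inl s) k (inl l₀) ∧
      (∀ v, ¬G.IsIsolated v → ¬G.IsPendant v → ρ (inl v) = σ (inl v)) ∧
      ∀ v, l = inl v → l₀ = v := by
  classical
  rcases l with l₀ | j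
  · exact ⟨l₀, σ, hfe, hσ, fun _ _ _ => rfl, fun _ h => inl_injective h⟩
  obtain ⟨z, hz⟩ := exists_inl_isIsolated_replaceG hσ hfe.ne
  obtain ⟨hfe', hσ'⟩ := hfe.relocate hσ isIsolated_addIsolated_inr hz
  refine ⟨z, _, hfe', hσ', fun v h₀ h₁ => ?_, fun _ h => (inr_ne_inl h).elim⟩
  have hvz : (inl v : V ⊕ Fin t) ≠ inl z := fun e =>
    not_isIsolated_replaceG (isIsolated_addIsolated_inl_iff.not.2 h₀)
      (isPendant_addIsolated_inl_iff.not.2 h₁) (e ▸ hz)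
  rw [Perm.mul_apply, swap_apply_of_ne_of_ne inl_ne_inr hvz]

/-- Added endpoints of the new edge are first moved into `V`, after which the isolated vertices
cancel. The vertices with `¬IsIsolated` and `¬IsPendant` are those of degree at least two,
which keep an edge in the replaced graph. -/
lemma IsFeasible.exists_of_addIsolated [Fintype V]
    (hfe : IsFeasible (addIsolated G t) (inl r) (inl s) k l)
    (hσ : copyG (addIsolated G t) σ = replaceG (addIsolated G t) (inl r) (inl s) k l) :
    ∃ k₀ l₀, ∃ φ ∈ feasiblePerms G, IsFeasible G r s k₀ l₀ ∧
      (∀ v, ¬G.IsIsolated v → ¬G.IsPendant v → σ (inl v) = inl (φ v)) ∧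
      ∀ v, k = inl v ∨ l = inl v → k₀ = v ∨ l₀ = v := by
  obtain ⟨l₀, ρ, hfe₁, hρ, hagree₁, hl₀⟩ := hfe.exists_inl_endpoint hσ
  rw [replaceG_comm] at hρ
  obtain ⟨k₀, ρ', hfe₂, hρ', hagree₂, hk₀⟩ := hfe₁.symm.exists_inl_endpoint hρ
  rw [replaceG_comm, replaceG_addIsolated] at hρ'
  obtain ⟨φ, hφ, hagree⟩ := exists_copyG_eq_of_copyG_addIsolated hρ'
  have hfeG : IsFeasible G r s k₀ l₀ := isFeasible_of_copyG
    (addIsolated_adj_inl_inl.1 hfe.1) (addIsolated_newEdge_inl_iff.1 hfe₂.symm.2.1) hφ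
  refine ⟨k₀, l₀, φ, ⟨r, s, k₀, l₀, hfeG, hφ⟩, hfeG, fun v h₀ h₁ => ?_, ?_⟩
  · rw [← hagree₁ v h₀ h₁, ← hagree₂ v h₀ h₁, hagree v (not_isIsolated_replaceG h₀ h₁)]
  · rintro v (h | h)
    exacts [Or.inl (hk₀ v h), Or.inr (hl₀ v h)]

end Transfer

section PendantOfLocalAmoeba

open Sum

variable {V : Type*} {G : SimpleGraph V} {t : ℕ}

/-- Without pendant vertices, no feasible replacement of `G ∪ tK₁` can put its new edge at an
isolated vertex (that vertex would become pendant), so the isolated vertices form an invariant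
set. -/
lemma exists_isPendant_of_localAmoeba [Fintype V] (hne : G ≠ ⊥) (ht : 0 < t)
    (hloc : LocalAmoeba (addIsolated G t)) : ∃ d, G.IsPendant d := by
  by_contra! hd
  obtain ⟨a, b, hab⟩ := ne_bot_iff_exists_adj.1 hne
  have hZ : ∀ σ ∈ feasiblePerms (addIsolated G t),
      Set.MapsTo σ {x | (addIsolated G t).IsIsolated x} {x | (addIsolated G t).IsIsolated x} :=
    fun _ => mapsTo_isIsolated fun _ _ _ _ τ hfe hτ hk => by
      obtain ⟨v, -, hv⟩ := isPendant_addIsolated_iff.1 (hfe.isPendant_apply hτ hk)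
      exact hd v hv
  have := hloc.mem_of_mapsTo hZ (a := inr ⟨0, ht⟩) (b := inl a) isIsolated_addIsolated_inr
  exact hab.not_isIsolated_left (isIsolated_addIsolated_inl_iff.1 this)

/-- An added endpoint of the new edge is first swapped with `w`, which stays isolated in the
replaced graph. -/
lemma IsFeasible.not_isIsolated_addIsolated [Fintype V] {w : V} {r s k l : V ⊕ Fin t}
    {σ : Perm (V ⊕ Fin t)} (hw : G.IsIsolated w)
    (hG : ∀ r s k l, IsFeasible G r s k l → ¬G.IsIsolated k)
    (hfe : IsFeasible (addIsolated G t) r s k l)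
    (hσ : copyG (addIsolated G t) σ = replaceG (addIsolated G t) r s k l) :
    ¬(addIsolated G t).IsIsolated k := by
  classical
  intro hk
  obtain ⟨r, s, -, rfl, rfl⟩ := addIsolated_adj.1 hfe.1
  have key : ∀ {k l : V ⊕ Fin t} {σ : Perm (V ⊕ Fin t)},
      IsFeasible (addIsolated G t) (inl r) (inl s) k l →
      copyG (addIsolated G t) σ = replaceG (addIsolated G t) (inl r) (inl s) k l →
      ∀ v, k = inl v ∨ l = inl v → ¬G.IsIsolated v := by
    intro k l σ hfe hσ v hv
    obtain ⟨k₀, l₀, -, -, hfeG, -, hend⟩ := hfe.exists_of_addIsolated hσ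
    rcases hend v hv with rfl | rfl
    exacts [hG _ _ _ _ hfeG, hG _ _ _ _ hfeG.symm]
  rcases k with v | j
  · exact key hfe hσ v (Or.inl rfl) (isIsolated_addIsolated_inl_iff.1 hk)
  by_cases hl : l = inl w
  · exact key hfe hσ w (Or.inr hl) hw
  rw [replaceG_comm] at hσ
  obtain ⟨hfe', hσ'⟩ := hfe.symm.relocate hσ hk
    (isIsolated_replaceG (isIsolated_addIsolated_inl_iff.2 hw) (Ne.symm hl) inl_ne_inr)
  exact key hfe' hσ' w (Or.inr rfl) hw

lemma apply_inl_mem_image_orbit [Fintype V] {σ : Perm (V ⊕ Fin t)}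
    (hσ : σ ∈ feasiblePerms (addIsolated G t)) {x v : V}
    (hv : v ∈ MulAction.orbit (ampGroup G) x) (h₀ : ¬G.IsIsolated v) (h₁ : ¬G.IsPendant v) :
    σ (inl v) ∈ inl '' MulAction.orbit (ampGroup G) x := by
  obtain ⟨r', s', k, l, hfe, hσ⟩ := hσ
  obtain ⟨r, s, -, rfl, rfl⟩ := addIsolated_adj.1 hfe.1
  obtain ⟨-, -, φ, hφ, -, hagree, -⟩ := hfe.exists_of_addIsolated hσ
  exact ⟨φ v, MulAction.mem_orbit_of_mem_orbit ⟨φ, Subgroup.subset_closure hφ⟩ hv,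
    (hagree v h₀ h₁).symm⟩

/-- Suppose the `S_G`-orbit `A` of `x` has no pendant vertex. If `A` has no isolated vertex,
`inl '' A` is invariant under the feasible permutations of `G ∪ tK₁`. Otherwise `A` contains every
isolated vertex of `G`, so no feasible replacement of `G` (and then of `G ∪ tK₁`) puts its new edge
at an isolated vertex, and `inl '' A` together with the isolated vertices is invariant. -/
theorem exists_isPendant_apply_of_localAmoeba [Fintype V] (hne : G ≠ ⊥) (ht : 0 < t)
    (hloc : LocalAmoeba (addIsolated G t)) (x : V) :
    ∃ σ ∈ ampGroup G, G.IsPendant (σ x) := by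
  classical
  by_contra! hx
  set A := MulAction.orbit (ampGroup G) x
  have hA : ∀ φ ∈ feasiblePerms G, ∀ v ∈ A, φ v ∈ A := fun φ hφ _ hv =>
    MulAction.mem_orbit_of_mem_orbit ⟨φ, Subgroup.subset_closure hφ⟩ hv
  have hApend : ∀ v ∈ A, ¬G.IsPendant v := by
    rintro _ ⟨⟨φ, hφ⟩, rfl⟩
    exact hx φ hφ
  by_cases hI : ∃ w ∈ A, G.IsIsolated w
  · obtain ⟨w, hwA, hw⟩ := hI
    obtain ⟨d, hd⟩ := exists_isPendant_of_localAmoeba hne ht hloc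
    have hnoG : ∀ r s k l, IsFeasible G r s k l → ¬G.IsIsolated k := fun r s k l hfe hk => by
      obtain ⟨χ, hχ, hχcopy⟩ := hfe.exists_mem_feasiblePerms
      have hkA : k ∈ A := by
        simpa using hA _ (swap_mem_feasiblePerms_of_isIsolated hne hw hk) w hwA
      exact hApend _ (hA χ hχ k hkA) (hfe.isPendant_apply hχcopy hk)
    have hiso : ∀ σ ∈ feasiblePerms (addIsolated G t), Set.MapsTo σ
        {a | (addIsolated G t).IsIsolated a} {a | (addIsolated G t).IsIsolated a} :=
      fun _ => mapsTo_isIsolated fun _ _ _ _ _ => IsFeasible.not_isIsolated_addIsolated hw hnoG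
    have hZ : ∀ σ ∈ feasiblePerms (addIsolated G t),
        Set.MapsTo σ (inl '' A ∪ {a | (addIsolated G t).IsIsolated a})
          (inl '' A ∪ {a | (addIsolated G t).IsIsolated a}) := by
      rintro σ hσ a (⟨v, hv, rfl⟩ | ha)
      · by_cases h₀ : G.IsIsolated v
        · exact Or.inr (hiso σ hσ (isIsolated_addIsolated_inl_iff.2 h₀))
        · exact Or.inl (apply_inl_mem_image_orbit hσ hv h₀ (hApend v hv))
      · exact Or.inr (hiso σ hσ ha)
    rcases hloc.mem_of_mapsTo hZ (a := inl x) (b := inl d)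
      (Or.inl ⟨x, MulAction.mem_orbit_self x, rfl⟩) with ⟨v, hv, hvd⟩ | hdI
    · exact hApend d (inl_injective hvd ▸ hv) hd
    · exact hd.not_isIsolated (isIsolated_addIsolated_inl_iff.1 hdI)
  · push Not at hI
    have hZ : ∀ σ ∈ feasiblePerms (addIsolated G t), Set.MapsTo σ (inl '' A) (inl '' A) := by
      rintro σ hσ _ ⟨v, hv, rfl⟩
      exact apply_inl_mem_image_orbit hσ hv (hI v hv) (hApend v hv)
    obtain ⟨v, -, hv⟩ := hloc.mem_of_mapsTo hZ (a := inl x) (b := inr ⟨0, ht⟩)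
      ⟨x, MulAction.mem_orbit_self x, rfl⟩
    exact inl_ne_inr hv

end PendantOfLocalAmoeba

section LocalAmoebaOfPendant

open Sum

variable {V : Type*} {G : SimpleGraph V} {t : ℕ}

lemma sumCongr_mem_feasiblePerms {φ : Perm V} (hφ : φ ∈ feasiblePerms G) :
    φ.sumCongr 1 ∈ feasiblePerms (addIsolated G t) := by
  obtain ⟨r, s, k, l, hfe, hφ⟩ := hφ
  have hσ : copyG (addIsolated G t) (φ.sumCongr 1) =
      replaceG (addIsolated G t) (inl r) (inl s) (inl k) (inl l) := by
    rw [copyG_addIsolated_sumCongr, hφ, replaceG_addIsolated]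
  exact ⟨_, _, _, _, isFeasible_of_copyG (addIsolated_adj_inl_inl.2 hfe.1)
    (addIsolated_newEdge_inl_iff.2 hfe.2.1) hσ, hσ⟩

lemma sumCongr_mem_ampGroup {φ : Perm V} (hφ : φ ∈ ampGroup G) :
    φ.sumCongr 1 ∈ ampGroup (addIsolated G t) :=
  (Subgroup.closure_le ((ampGroup (addIsolated G t)).comap
    ((Perm.sumCongrHom V (Fin t)).comp (MonoidHom.inl _ _)))).2
    (fun _ hφ => Subgroup.subset_closure (sumCongr_mem_feasiblePerms hφ)) hφ

lemma swap_mem_feasiblePerms_of_isPendant [DecidableEq V] {v : V} (hv : G.IsPendant v)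
    (j : Fin t) : swap (inl v) (inr j) ∈ feasiblePerms (addIsolated G t) := by
  obtain ⟨n, hn, hnuniq⟩ := hv
  have hvIso :
      (replaceG (addIsolated G t) (inl v) (inl n) (inl n) (inr j)).IsIsolated (inl v) := by
    rintro (c | i) hc
    · rcases replaceG_adj.1 hc with ⟨h, hne⟩ | ⟨h, -⟩
      · exact hne (by rw [hnuniq c (addIsolated_adj_inl_inl.1 h)])
      · simp [hn.ne] at h
    · rcases replaceG_adj.1 hc with ⟨h, -⟩ | ⟨h, -⟩
      · exact not_addIsolated_adj_inr h
      · simp [hn.ne] at h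
  have hback : copyG (replaceG (addIsolated G t) (inl v) (inl n) (inl n) (inr j))
      (swap (inr j) (inl v)) = addIsolated G t := by
    rw [copyG_replaceG_swap isIsolated_addIsolated_inr hvIso inl_ne_inr, replaceG_comm,
      replaceG_self (addIsolated_adj_inl_inl.2 hn)]
  have hσ : copyG (addIsolated G t) (swap (inl v) (inr j)) =
      replaceG (addIsolated G t) (inl v) (inl n) (inl n) (inr j) := by
    nth_rw 1 [← hback]
    rw [copyG_copyG, swap_comm (inr j), swap_mul_self]
    rfl
  exact ⟨_, _, _, _, isFeasible_of_copyG (addIsolated_adj_inl_inl.2 hn)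
    (Or.inl ((compl_adj _ _ _).2 ⟨inl_ne_inr, not_addIsolated_adj_inr⟩)) hσ, hσ⟩

lemma swap_mem_of_swap_mem_of_swap_mem {α : Type*} [DecidableEq α] {Γ : Subgroup (Perm α)}
    {a b c : α} (hac : a ≠ c) (hab : a ≠ b) (h₁ : swap a c ∈ Γ) (h₂ : swap c b ∈ Γ) :
    swap a b ∈ Γ := by
  rw [swap_comm, ← swap_mul_swap_mul_swap hac hab]
  exact Γ.mul_mem (Γ.mul_mem h₂ h₁) h₂

theorem localAmoeba_addIsolated [Fintype V] (hne : G ≠ ⊥) (ht : 0 < t)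
    (h : ∀ x, ∃ σ ∈ ampGroup G, G.IsPendant (σ x)) : LocalAmoeba (addIsolated G t) := by
  classical
  have hswap : ∀ x j, swap (inl x) (inr j) ∈ ampGroup (addIsolated G t) := by
    intro x j
    obtain ⟨φ, hφ, hpend⟩ := h x
    have hconj : swap (inl x) (inr j) =
        (φ⁻¹).sumCongr 1 * swap (inl (φ x)) (inr j) * ((φ⁻¹).sumCongr 1)⁻¹ := by
      simpa using swap_apply_apply ((φ⁻¹).sumCongr 1) (inl (φ x)) (inr j)
    have hf := sumCongr_mem_ampGroup (t := t) (inv_mem hφ)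
    rw [hconj]
    exact mul_mem (mul_mem hf (Subgroup.subset_closure
      (swap_mem_feasiblePerms_of_isPendant hpend j))) (inv_mem hf)
  obtain ⟨x₀, -, -⟩ := ne_bot_iff_exists_adj.1 hne
  rw [LocalAmoeba, eq_top_iff, ← Perm.closure_isSwap, Subgroup.closure_le]
  rintro _ ⟨a | i, b | j, hab, rfl⟩
  · refine swap_mem_of_swap_mem_of_swap_mem inl_ne_inr hab (hswap a ⟨0, ht⟩) ?_
    rw [swap_comm]
    exact hswap b ⟨0, ht⟩
  · exact hswap a j
  · rw [swap_comm]
    exact hswap b i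
  · refine swap_mem_of_swap_mem_of_swap_mem inr_ne_inl hab ?_ (hswap x₀ j)
    rw [swap_comm]
    exact hswap x₀ i

end LocalAmoebaOfPendant

theorem stmt12 {V : Type*} [Fintype V] (G : SimpleGraph V) [DecidableRel G.Adj]
    (hne : G ≠ ⊥) :
    (GlobalAmoeba G ↔ ∀ x : V, ∃ σ ∈ ampGroup G, G.degree (σ x) = 1) ∧
    (GlobalAmoeba G ↔ LocalAmoeba (addIsolated G 1)) := by
  have hglobal : GlobalAmoeba G ↔ ∀ x, ∃ σ ∈ ampGroup G, G.IsPendant (σ x) :=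
    ⟨fun ⟨T, hT⟩ => exists_isPendant_apply_of_localAmoeba hne (lt_max_of_lt_right one_pos)
      (hT _ (le_max_left T 1)), fun h => ⟨1, fun _ ht => localAmoeba_addIsolated hne ht h⟩⟩
  simp only [degree_eq_one_iff_existsUnique_adj]
  exact ⟨hglobal, hglobal.trans ⟨localAmoeba_addIsolated hne one_pos,
    exists_isPendant_apply_of_localAmoeba hne one_pos⟩⟩
end
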